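/- Let μ ∈ (0,1), r ∈ ℝ with r ≠ 0, and φ ∈ ℝ. Let Q be the 5×5 real symmetric matrix whose nonzero entries (in a fixed ordering of indices 1,…,5) are Q_{11} = 4μ(cosh 2r − cos φ sinh 2r), Q_{22} = 4μ(cosh 2r + cos φ sinh 2r), Q_{12} = Q_{21} = 4μ sinh(2r) sin φ, Q_{33} = 4/(1+μ²), Q_{44} = sinh²(2r)/(1+μ²), Q_{55} = 4μ²/(1−μ²), and let U be the 5×5 real antisymmetric matrix whose nonzero entries are U_{12} = −U_{21} = 4μ² and U_{43} = −U_{34} = 4μ sinh(2r)/(1+μ²)². Then the eigenvalues of the matrix iQ⁻¹U are exactly {2μ/(1+μ²), μ, 0, −μ, −2μ/(1+μ²)}; in particular the largest eigenvalue is 2μ/(1+μ²). -/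

import Mathlib

/-!
Both `Q` and `U` respect the splitting of the parameters into `(Re α, Im α)`, `(r, φ)` and `N`,
so `Q⁻¹U` is block diagonal: a traceless 2 × 2 block of determinant
`det U₁ / det Q₁ = 16μ⁴ / 16μ² = μ²`, an antidiagonal 2 × 2 block whose entries multiply to
`-(2μ/(1+μ²))²`, and a zero. Hence the characteristic polynomial of `iQ⁻¹U` is
`(X² - μ²)(X² - ρ²)X` with `ρ = 2μ/(1+μ²)`, and `ρ ≥ μ` because `μ ≤ 1`.
-/

open Matrix Polynomial

/-- The SLD quantum Fisher information matrix of the full single-mode Gaussian model with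
purity `μ`, squeezing `r e^{iφ}`, in the parameter ordering `(Re α, Im α, r, φ, N)`. -/
noncomputable def gaussQmat (μ r φ : ℝ) : Matrix (Fin 5) (Fin 5) ℝ :=
  !![4 * μ * (Real.cosh (2 * r) - Real.cos φ * Real.sinh (2 * r)),
       4 * μ * Real.sinh (2 * r) * Real.sin φ, 0, 0, 0;
     4 * μ * Real.sinh (2 * r) * Real.sin φ,
       4 * μ * (Real.cosh (2 * r) + Real.cos φ * Real.sinh (2 * r)), 0, 0, 0;
     0, 0, 4 / (1 + μ ^ 2), 0, 0;
     0, 0, 0, Real.sinh (2 * r) ^ 2 / (1 + μ ^ 2), 0;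
     0, 0, 0, 0, 4 * μ ^ 2 / (1 - μ ^ 2)]

/-- The Uhlmann curvature matrix of the same model. -/
noncomputable def gaussUmat (μ r : ℝ) : Matrix (Fin 5) (Fin 5) ℝ :=
  !![0, 4 * μ ^ 2, 0, 0, 0;
     -(4 * μ ^ 2), 0, 0, 0, 0;
     0, 0, 0, -(4 * μ * Real.sinh (2 * r) / (1 + μ ^ 2) ^ 2), 0;
     0, 0, 4 * μ * Real.sinh (2 * r) / (1 + μ ^ 2) ^ 2, 0, 0;
     0, 0, 0, 0, 0]

section BlockMat5
variable {R S : Type*}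

def blockMat5 [Zero R] (a b c d e f : R) : Matrix (Fin 5) (Fin 5) R :=
  !![a, b, 0, 0, 0;
     c, d, 0, 0, 0;
     0, 0, 0, e, 0;
     0, 0, f, 0, 0;
     0, 0, 0, 0, 0]

theorem blockMat5_map [Zero R] [Zero S] {g : R → S} (hg : g 0 = 0) (a b c d e f : R) :
    (blockMat5 a b c d e f).map g = blockMat5 (g a) (g b) (g c) (g d) (g e) (g f) := by
  ext i j
  fin_cases i <;> fin_cases j <;> simp [blockMat5, hg]

theorem smul_blockMat5 [MulZeroClass R] (k a b c d e f : R) :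
    k • blockMat5 a b c d e f = blockMat5 (k * a) (k * b) (k * c) (k * d) (k * e) (k * f) := by
  ext i j
  fin_cases i <;> fin_cases j <;> simp [blockMat5]

theorem charpoly_blockMat5 [CommRing R] (a b c d e f : R) :
    (blockMat5 a b c d e f).charpoly
      = (X ^ 2 - C (a + d) * X + C (a * d - b * c)) * (X ^ 2 - C (e * f)) * X := by
  rw [Matrix.charpoly, Matrix.det_succ_row_zero]
  simp [blockMat5, Fin.sum_univ_succ, Fin.succAbove, Matrix.det_succ_row_zero, charmatrix_apply]
  ring

theorem charpoly_I_smul_map_ofReal_blockMat5 {a b c d e f m ρ : ℝ} (htr : a + d = 0)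
    (hdet : a * d - b * c = m ^ 2) (hoff : e * f = -ρ ^ 2) :
    (Complex.I • (blockMat5 a b c d e f).map Complex.ofReal).charpoly =
      (X ^ 2 - C ((m : ℂ) ^ 2)) * (X ^ 2 - C ((ρ : ℂ) ^ 2)) * X := by
  have htrC : Complex.I * a + Complex.I * d = 0 := by
    rw [← mul_add, ← Complex.ofReal_add, htr, Complex.ofReal_zero, mul_zero]
  have hdetC :
      Complex.I * a * (Complex.I * d) - Complex.I * b * (Complex.I * c) = -(m : ℂ) ^ 2 := by
    have h : (a : ℂ) * d - b * c = m ^ 2 := by exact_mod_cast hdet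
    linear_combination ((a : ℂ) * d - b * c) * Complex.I_sq - h
  have hoffC : Complex.I * e * (Complex.I * f) = (ρ : ℂ) ^ 2 := by
    have h : (e : ℂ) * f = -ρ ^ 2 := by exact_mod_cast hoff
    linear_combination ((e : ℂ) * f) * Complex.I_sq - h
  rw [blockMat5_map Complex.ofReal_zero, smul_blockMat5, charpoly_blockMat5, htrC, hdetC, hoffC,
    map_zero, zero_mul, sub_zero, map_neg, ← sub_eq_add_neg]

end BlockMat5

theorem roots_X_sq_sub_mul_X_sq_sub_mul_X {K : Type*} [Field K] (a b : K) :
    ((X ^ 2 - C (a ^ 2)) * (X ^ 2 - C (b ^ 2)) * X).roots = {b, a, 0, -a, -b} := by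
  have hfac : (X ^ 2 - C (a ^ 2)) * (X ^ 2 - C (b ^ 2)) * X
      = (({b, a, 0, -a, -b} : Multiset K).map fun z => X - C z).prod := by
    simp only [Multiset.insert_eq_cons, Multiset.map_cons, Multiset.map_singleton,
      Multiset.prod_cons, Multiset.prod_singleton, map_neg, map_pow, map_zero, sub_zero]
    ring
  rw [hfac, roots_multiset_prod_X_sub_C]

theorem le_two_mul_div_one_add_sq {μ : ℝ} (hμ0 : 0 ≤ μ) (hμ1 : μ ≤ 1) :
    μ ≤ 2 * μ / (1 + μ ^ 2) := by
  rw [le_div_iff₀ (by positivity)]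
  nlinarith

noncomputable def gaussQmatInv (μ r φ : ℝ) : Matrix (Fin 5) (Fin 5) ℝ :=
  !![(Real.cosh (2 * r) + Real.cos φ * Real.sinh (2 * r)) / (4 * μ),
       -(Real.sinh (2 * r) * Real.sin φ) / (4 * μ), 0, 0, 0;
     -(Real.sinh (2 * r) * Real.sin φ) / (4 * μ),
       (Real.cosh (2 * r) - Real.cos φ * Real.sinh (2 * r)) / (4 * μ), 0, 0, 0;
     0, 0, (1 + μ ^ 2) / 4, 0, 0;
     0, 0, 0, (1 + μ ^ 2) / Real.sinh (2 * r) ^ 2, 0;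
     0, 0, 0, 0, (1 - μ ^ 2) / (4 * μ ^ 2)]

theorem gaussQmat_mul_gaussQmatInv {μ r : ℝ} (φ : ℝ) (hμ : μ ≠ 0) (hμ1 : μ ^ 2 ≠ 1)
    (hr : r ≠ 0) : gaussQmat μ r φ * gaussQmatInv μ r φ = 1 := by
  have hs : Real.sinh (2 * r) ≠ 0 := Real.sinh_ne_zero.mpr (mul_ne_zero two_ne_zero hr)
  have h1 : (1 : ℝ) - μ ^ 2 ≠ 0 := sub_ne_zero.mpr hμ1.symm
  have h2 : (1 : ℝ) + μ ^ 2 ≠ 0 := by positivity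
  -- `16μ²` times this is the determinant of the upper 2 × 2 block of `Q`
  have hdet : Real.cosh (2 * r) ^ 2 - Real.cos φ ^ 2 * Real.sinh (2 * r) ^ 2
      - Real.sinh (2 * r) ^ 2 * Real.sin φ ^ 2 = 1 := by
    linear_combination Real.cosh_sq_sub_sinh_sq (2 * r)
      - Real.sinh (2 * r) ^ 2 * Real.sin_sq_add_cos_sq φ
  rw [gaussQmat, gaussQmatInv]
  generalize Real.sinh (2 * r) = s at hs hdet ⊢
  generalize Real.cosh (2 * r) = c at hdet ⊢
  ext i j
  fin_cases i <;> fin_cases j <;> simp [Matrix.mul_apply, Fin.sum_univ_five]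
  all_goals field_simp
  all_goals first | ring1 | linear_combination hdet | exact h2

theorem gaussQmat_inv_mul_gaussUmat {μ r : ℝ} (φ : ℝ) (hμ : μ ≠ 0) (hμ1 : μ ^ 2 ≠ 1)
    (hr : r ≠ 0) :
    (gaussQmat μ r φ)⁻¹ * gaussUmat μ r =
      blockMat5 (μ * Real.sinh (2 * r) * Real.sin φ)
        (μ * (Real.cosh (2 * r) + Real.cos φ * Real.sinh (2 * r)))
        (-(μ * (Real.cosh (2 * r) - Real.cos φ * Real.sinh (2 * r))))
        (-(μ * Real.sinh (2 * r) * Real.sin φ))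
        (-(μ * Real.sinh (2 * r) / (1 + μ ^ 2)))
        (4 * μ / (Real.sinh (2 * r) * (1 + μ ^ 2))) := by
  have hs : Real.sinh (2 * r) ≠ 0 := Real.sinh_ne_zero.mpr (mul_ne_zero two_ne_zero hr)
  rw [Matrix.inv_eq_right_inv (gaussQmat_mul_gaussQmatInv φ hμ hμ1 hr), gaussQmatInv, gaussUmat,
    blockMat5]
  generalize Real.sinh (2 * r) = s at hs ⊢
  ext i j
  fin_cases i <;> fin_cases j <;> simp [Matrix.mul_apply, Fin.sum_univ_five]
  all_goals field_simp

theorem charpoly_gaussQmat_inv_mul_gaussUmat {μ r : ℝ} (φ : ℝ) (hμ : μ ≠ 0) (hμ1 : μ ^ 2 ≠ 1)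
    (hr : r ≠ 0) :
    (Complex.I • (((gaussQmat μ r φ)⁻¹ * gaussUmat μ r).map Complex.ofReal)).charpoly =
      (X ^ 2 - C ((μ : ℂ) ^ 2)) * (X ^ 2 - C (((2 * μ / (1 + μ ^ 2) : ℝ) : ℂ) ^ 2)) * X := by
  have hs : Real.sinh (2 * r) ≠ 0 := Real.sinh_ne_zero.mpr (mul_ne_zero two_ne_zero hr)
  have h2 : 1 + μ ^ 2 ≠ 0 := by positivity
  rw [gaussQmat_inv_mul_gaussUmat φ hμ hμ1 hr]
  apply charpoly_I_smul_map_ofReal_blockMat5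
  · ring
  · linear_combination μ ^ 2 * Real.cosh_sq_sub_sinh_sq (2 * r)
      - μ ^ 2 * Real.sinh (2 * r) ^ 2 * Real.sin_sq_add_cos_sq φ
  · field_simp
    ring

/-- The eigenvalues of `iQ⁻¹U` for the full single-mode Gaussian model are exactly
`{2μ/(1+μ²), μ, 0, −μ, −2μ/(1+μ²)}`; in particular every eigenvalue has real part at most
`2μ/(1+μ²)`, which is thus the largest eigenvalue. -/
theorem stmt18 (μ r φ : ℝ) (hμ0 : 0 < μ) (hμ1 : μ < 1) (hr : r ≠ 0) :
    ((Complex.I • (((gaussQmat μ r φ)⁻¹ * gaussUmat μ r).map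
        Complex.ofReal)).charpoly).roots
      = {((2 * μ / (1 + μ ^ 2) : ℝ) : ℂ), ((μ : ℝ) : ℂ), 0, -((μ : ℝ) : ℂ),
          -((2 * μ / (1 + μ ^ 2) : ℝ) : ℂ)} ∧
    (∀ z ∈ ((Complex.I • (((gaussQmat μ r φ)⁻¹ * gaussUmat μ r).map
        Complex.ofReal)).charpoly).roots, z.re ≤ 2 * μ / (1 + μ ^ 2)) := by
  have hμsq : μ ^ 2 ≠ 1 := by nlinarith
  have hroots := charpoly_gaussQmat_inv_mul_gaussUmat φ hμ0.ne' hμsq hr ▸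
    roots_X_sq_sub_mul_X_sq_sub_mul_X (μ : ℂ) ((2 * μ / (1 + μ ^ 2) : ℝ) : ℂ)
  refine ⟨hroots, fun z hz => ?_⟩
  have hρ : μ ≤ 2 * μ / (1 + μ ^ 2) := le_two_mul_div_one_add_sq hμ0.le hμ1.le
  simp only [hroots, Multiset.insert_eq_cons, Multiset.mem_cons, Multiset.mem_singleton] at hz
  rcases hz with rfl | rfl | rfl | rfl | rfl <;>
    simp only [Complex.ofReal_re, Complex.neg_re, Complex.zero_re] <;> linarith
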